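/- arXiv:1611.09005 — 2 statements merged into one kernel-verified Lean document; each statement's English description precedes it below -/
import Mathlib

section
/- If C_S : R^d → R is a continuous positive definite function (covariance) and V is a random vector in R^d with distribution independent of the field, then the function C(h,u) = E[C_S(h − uV)] is a positive definite function on R^d × R (i.e., a valid space-time covariance). -/
open MeasureTheory

/-!
For a fixed velocity `v`, the map `(h, u) ↦ h - u • v` is additive, so `C_S(h - u v)` is positive
definite on `ℝ^d × ℝ` as the pullback of `C_S`. Averaging over `v = V ω` preserves positive
definiteness, since the quadratic form of an integral is the integral of the (nonnegative)
quadratic forms.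
-/

def IsPosDefFun {G : Type*} [AddGroup G] (f : G → ℝ) : Prop :=
  ∀ (n : ℕ) (x : Fin n → G) (a : Fin n → ℝ), 0 ≤ ∑ i, ∑ j, a i * a j * f (x i - x j)

namespace IsPosDefFun

variable {G H : Type*} [AddGroup G] [AddGroup H]

theorem comp_addMonoidHom {f : H → ℝ} (hf : IsPosDefFun f) (L : G →+ H) :
    IsPosDefFun (f ∘ L) := by
  intro n x a
  simpa only [Function.comp_apply, map_sub] using hf n (fun i => L (x i)) a

theorem integral {Ω : Type*} [MeasurableSpace Ω] (μ : Measure Ω) {f : Ω → G → ℝ}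
    (hf : ∀ ω, IsPosDefFun (f ω)) (hint : ∀ g, Integrable (fun ω => f ω g) μ) :
    IsPosDefFun (fun g => ∫ ω, f ω g ∂μ) := by
  intro n x a
  have hint_term : ∀ i j, Integrable (fun ω => a i * a j * f ω (x i - x j)) μ :=
    fun i j => (hint (x i - x j)).const_mul _
  calc 0 ≤ ∫ ω, ∑ i, ∑ j, a i * a j * f ω (x i - x j) ∂μ :=
        integral_nonneg fun ω => hf ω n x a
    _ = ∑ i, ∑ j, a i * a j * ∫ ω, f ω (x i - x j) ∂μ := by
        rw [integral_finsetSum _ fun i _ => integrable_finsetSum _ fun j _ => hint_term i j]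
        refine Finset.sum_congr rfl fun i _ => ?_
        rw [integral_finsetSum _ fun j _ => hint_term i j]
        simp only [integral_const_mul]

end IsPosDefFun

def transportShift (E : Type*) [AddCommGroup E] [Module ℝ E] (v : E) : E × ℝ →+ E :=
  (LinearMap.fst ℝ E ℝ - (LinearMap.snd ℝ E ℝ).smulRight v).toAddMonoidHom

theorem transport_covariance_posDef_general {d : ℕ} {Ω : Type*} [MeasurableSpace Ω]
    (P : Measure Ω)
    (C_S : (Fin d → ℝ) → ℝ)
    (hpd : ∀ (n : ℕ) (x : Fin n → Fin d → ℝ) (a : Fin n → ℝ),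
      0 ≤ ∑ i, ∑ j, a i * a j * C_S (x i - x j))
    (V : Ω → Fin d → ℝ)
    (hint : ∀ (h : Fin d → ℝ) (u : ℝ), Integrable (fun ω => C_S (h - u • V ω)) P)
    (C : (Fin d → ℝ) → ℝ → ℝ)
    (hC : ∀ h u, C h u = ∫ ω, C_S (h - u • V ω) ∂P) :
    ∀ (n : ℕ) (x : Fin n → Fin d → ℝ) (t : Fin n → ℝ) (a : Fin n → ℝ),
      0 ≤ ∑ i, ∑ j, a i * a j * C (x i - x j) (t i - t j) := by
  have hC_posDef : IsPosDefFun (Function.uncurry C) := by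
    have hmix := IsPosDefFun.integral P
      (fun ω => IsPosDefFun.comp_addMonoidHom hpd (transportShift _ (V ω)))
      (fun p : (Fin d → ℝ) × ℝ => hint p.1 p.2)
    convert hmix using 2 with p
    exact hC p.1 p.2
  intro n x t a
  exact hC_posDef n (fun i => (x i, t i)) a

/-- If `C_S` is a continuous positive definite function on `ℝ^d` and `V` a random
vector, then the transport covariance `C(h,u) = E[C_S(h - u V)]` is positive definite on
`ℝ^d × ℝ`. -/
theorem transport_covariance_posDef {d : ℕ} {Ω : Type*} [MeasurableSpace Ω]
    (P : Measure Ω) [IsProbabilityMeasure P]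
    (C_S : (Fin d → ℝ) → ℝ) (hcont : Continuous C_S)
    (hpd : ∀ (n : ℕ) (x : Fin n → Fin d → ℝ) (a : Fin n → ℝ),
      0 ≤ ∑ i, ∑ j, a i * a j * C_S (x i - x j))
    (V : Ω → Fin d → ℝ) (hV : Measurable V)
    (hint : ∀ (h : Fin d → ℝ) (u : ℝ), Integrable (fun ω => C_S (h - u • V ω)) P)
    (C : (Fin d → ℝ) → ℝ → ℝ)
    (hC : ∀ h u, C h u = ∫ ω, C_S (h - u • V ω) ∂P) :
    ∀ (n : ℕ) (x : Fin n → Fin d → ℝ) (t : Fin n → ℝ) (a : Fin n → ℝ),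
      0 ≤ ∑ i, ∑ j, a i * a j * C (x i - x j) (t i - t j) :=
  transport_covariance_posDef_general P C_S hpd V hint C hC
end

section
/- Let ψ_S be continuous on [−1,1] and twice differentiable on (−1,1), ω uniformly distributed on S², and define ψ(θ,u) = E[ψ_S(x^T R_ω(uα) y)] where θ = arccos(x^T y) ∈ (0,π). Then ∂ψ/∂u(θ,0) = 0 and ∂²ψ/∂u²(θ,0) = (α²/3){ψ_S''(cos θ) sin²θ − 2 ψ_S'(cos θ) cos θ}. Consequently, for the linear covariance ψ_S(c) = c, the transport covariance equals ψ(θ,u) = (1 + 2cos(uα)) cos(θ)/3, and the dimple indicator −2cos θ is negative on (0, π/2) and positive on (π/2, π). -/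
/-!
By Rodrigues' formula, `x ⬝ᵥ R_ω(β) y = d + a(ω) sin β + b(ω) (cos β - 1)` with `d = cos θ`,
`a(ω) = (y × x) ⬝ᵥ ω` and `b(ω) = d - (x ⬝ᵥ ω)(y ⬝ᵥ ω)`: every curve `β ↦ x ⬝ᵥ R_ω(β) y` passes
through `d` at `β = 0`. Differentiating twice under the integral gives
`ψ''(0) = α² (ψ_S''(d) E[a²] - ψ_S'(d) E[b])`, and rotation invariance of the law of `ω` gives
`E[ω] = 0` and `E[ω ωᵀ] = I / 3`, hence `E[a] = 0`, `E[a²] = sin² θ / 3` and `E[b] = 2 d / 3`.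

Since all curves start at the same point `d`, the second derivative only needs `ψ_S'` to be
differentiable at `d`: the difference quotients of `ψ_S'` along the curves are then dominated,
while `ψ_S''` may be unbounded near `d`.
-/

open MeasureTheory Matrix Set Filter Topology Metric Real

theorem ContinuousOn.aemeasurable_comp {α β γ : Type*} [MeasurableSpace α]
    [TopologicalSpace β] [MeasurableSpace β] [OpensMeasurableSpace β]
    [TopologicalSpace γ] [MeasurableSpace γ] [BorelSpace γ] {g : β → γ} {s : Set β}
    (hg : ContinuousOn g s) (hs : MeasurableSet s) {μ : Measure α} {f : α → β}
    (hf : AEMeasurable f μ) (hfs : ∀ᵐ x ∂μ, f x ∈ s) : AEMeasurable (fun x ↦ g (f x)) μ := by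
  have hmap : (μ.map f).restrict s = μ.map f :=
    Measure.restrict_eq_self_of_ae_mem ((ae_map_iff hf hs).2 hfs)
  exact (hmap ▸ hg.aemeasurable hs).comp_aemeasurable hf

theorem hasDerivAt_integral_of_dominated_loc_of_lip' {𝕜 α E : Type*} [RCLike 𝕜]
    [MeasurableSpace α] {μ : Measure α} [NormedAddCommGroup E] [NormedSpace ℝ E] [NormedSpace 𝕜 E]
    {F : 𝕜 → α → E} {F' : α → E} {x₀ : 𝕜} {s : Set 𝕜} {bound : α → ℝ} (hs : s ∈ 𝓝 x₀)
    (hF_meas : ∀ x ∈ s, AEStronglyMeasurable (F x) μ) (hF_int : Integrable (F x₀) μ)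
    (hF'_meas : AEStronglyMeasurable F' μ)
    (h_lipsch : ∀ᵐ a ∂μ, ∀ x ∈ s, ‖F x a - F x₀ a‖ ≤ bound a * ‖x - x₀‖)
    (bound_integrable : Integrable bound μ)
    (h_diff : ∀ᵐ a ∂μ, HasDerivAt (F · a) (F' a) x₀) :
    Integrable F' μ ∧ HasDerivAt (fun x ↦ ∫ a, F x a ∂μ) (∫ a, F' a ∂μ) x₀ := by
  set L : E →L[𝕜] 𝕜 →L[𝕜] E := ContinuousLinearMap.smulRightL 𝕜 𝕜 E 1
  replace h_diff : ∀ᵐ a ∂μ, HasFDerivAt (F · a) (L (F' a)) x₀ :=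
    h_diff.mono fun x hx ↦ hx.hasFDerivAt
  have hm : AEStronglyMeasurable (L ∘ F') μ := L.continuous.comp_aestronglyMeasurable hF'_meas
  obtain ⟨hF'_int, key⟩ := hasFDerivAt_integral_of_dominated_loc_of_lip'
    hs hF_meas hF_int hm h_lipsch bound_integrable h_diff
  replace hF'_int : Integrable F' μ := by
    rw [← integrable_norm_iff hm] at hF'_int
    simpa [L, (· ∘ ·), integrable_norm_iff hF'_meas] using! hF'_int
  refine ⟨hF'_int, ?_⟩
  by_cases hE : CompleteSpace E; swap
  · simpa [integral, hE] using! hasDerivAt_const x₀ 0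
  simp_rw [hasDerivAt_iff_hasFDerivAt] at h_diff ⊢
  simpa only [(· ∘ ·), ContinuousLinearMap.integral_comp_comm _ hF'_int] using! key

theorem deriv_deriv_comp_mul_left {𝕜 : Type*} [NontriviallyNormedField 𝕜] (f : 𝕜 → 𝕜)
    (c x : 𝕜) : deriv (deriv (f <| c * ·)) x = c ^ 2 * deriv (deriv f) (c * x) := by
  have h : deriv (f <| c * ·) = fun y ↦ c * deriv f (c * y) :=
    funext fun y ↦ deriv_comp_mul_left c f y
  rw [h, deriv_const_mul_field']
  simp only [deriv_comp_mul_left, smul_eq_mul]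
  ring

def IsRotationInvariant {n : ℕ} (P : Measure (Fin n → ℝ)) : Prop :=
  ∀ O : orthogonalGroup (Fin n) ℝ, P.map (O : Matrix (Fin n) (Fin n) ℝ).mulVec = P

section SphereMoments

variable {n : ℕ} {P : Measure (Fin n → ℝ)}

theorem Continuous.exists_ae_abs_le_of_sphere {h : (Fin n → ℝ) → ℝ} (hh : Continuous h)
    (hsphere : ∀ᵐ v ∂P, v ⬝ᵥ v = 1) : ∃ M, ∀ᵐ v ∂P, |h v| ≤ M := by
  have hS : IsCompact {v : Fin n → ℝ | v ⬝ᵥ v = 1} := by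
    refine isCompact_of_isClosed_isBounded (isClosed_eq (by fun_prop) continuous_const)
      ((isBounded_closedBall (x := (0 : Fin n → ℝ)) (r := 1)).subset fun v hv ↦ ?_)
    rw [mem_closedBall_zero_iff, pi_norm_le_iff_of_nonneg zero_le_one]
    intro i
    rw [Real.norm_eq_abs, ← sq_le_one_iff_abs_le_one]
    calc v i ^ 2 ≤ ∑ j, v j ^ 2 :=
          Finset.single_le_sum (fun j _ ↦ sq_nonneg (v j)) (Finset.mem_univ i)
      _ = 1 := by simpa [dotProduct, sq] using hv
  obtain ⟨M, hM⟩ := hS.exists_bound_of_continuousOn hh.continuousOn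
  exact ⟨M, hsphere.mono fun v hv ↦ hM v hv⟩

theorem Continuous.integrable_of_sphere [IsFiniteMeasure P] {h : (Fin n → ℝ) → ℝ}
    (hh : Continuous h) (hsphere : ∀ᵐ v ∂P, v ⬝ᵥ v = 1) : Integrable h P := by
  obtain ⟨M, hM⟩ := hh.exists_ae_abs_le_of_sphere hsphere
  exact Integrable.of_bound hh.aestronglyMeasurable M hM

theorem IsRotationInvariant.integral_comp_mulVec (hP : IsRotationInvariant P)
    {O : Matrix (Fin n) (Fin n) ℝ} (hO : O ∈ orthogonalGroup (Fin n) ℝ)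
    {h : (Fin n → ℝ) → ℝ} (hh : AEStronglyMeasurable h P) :
    ∫ v, h (O *ᵥ v) ∂P = ∫ v, h v ∂P := by
  have hmeas : Measurable O.mulVec := (mulVecLin O).continuous_of_finiteDimensional.measurable
  rw [← integral_map hmeas.aemeasurable (by rwa [hP ⟨O, hO⟩]), hP ⟨O, hO⟩]

theorem IsRotationInvariant.integral_dotProduct (hP : IsRotationInvariant P)
    (a : Fin n → ℝ) : ∫ v, a ⬝ᵥ v ∂P = 0 := by
  have h := hP.integral_comp_mulVec (O := -1) (by simp [mem_orthogonalGroup_iff])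
    (h := fun v ↦ a ⬝ᵥ v) (by fun_prop)
  simp only [neg_mulVec, one_mulVec, dotProduct_neg, integral_neg] at h
  linarith

theorem IsRotationInvariant.integral_mul_apply_of_ne (hP : IsRotationInvariant P)
    {i j : Fin n} (hij : i ≠ j) : ∫ v, v i * v j ∂P = 0 := by
  let r : Fin n → ℝ := fun k ↦ if k = i then -1 else 1
  have hr : diagonal r ∈ orthogonalGroup (Fin n) ℝ := by
    rw [mem_orthogonalGroup_iff, diagonal_transpose, diagonal_mul_diagonal, ← diagonal_one]
    congr 1; ext k; by_cases hk : k = i <;> simp [r, hk]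
  have h := hP.integral_comp_mulVec hr (h := fun v ↦ v i * v j) (by fun_prop)
  simp only [mulVec_diagonal, r, ↓reduceIte, if_neg hij.symm, one_mul, neg_mul,
    integral_neg] at h
  linarith

theorem IsRotationInvariant.integral_mul_self_apply (hP : IsRotationInvariant P)
    (i j : Fin n) : ∫ v, v i * v i ∂P = ∫ v, v j * v j ∂P := by
  have hσ : (Equiv.swap i j).permMatrix ℝ ∈ orthogonalGroup (Fin n) ℝ := by
    rw [mem_orthogonalGroup_iff, transpose_permMatrix, ← permMatrix_mul, inv_mul_cancel,
      permMatrix_one]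
  have h := hP.integral_comp_mulVec hσ (h := fun v ↦ v j * v j) (by fun_prop)
  simpa [permMatrix_mulVec] using h

theorem IsRotationInvariant.integral_mul_apply [IsProbabilityMeasure P]
    (hP : IsRotationInvariant P) (hsphere : ∀ᵐ v ∂P, v ⬝ᵥ v = 1) (i j : Fin n) :
    ∫ v, v i * v j ∂P = if i = j then (n : ℝ)⁻¹ else 0 := by
  split_ifs with hij
  · subst hij
    have hsum : ∑ k, ∫ v, v k * v k ∂P = 1 := by
      rw [← integral_finsetSum _ fun k _ ↦
        (by fun_prop : Continuous _).integrable_of_sphere hsphere]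
      simp [integral_congr_ae (hsphere.mono fun v hv ↦ (by simpa [dotProduct] using hv :
        ∑ k, v k * v k = 1))]
    simp only [hP.integral_mul_self_apply _ i, Finset.sum_const, Finset.card_univ,
      Fintype.card_fin, nsmul_eq_mul] at hsum
    exact eq_inv_of_mul_eq_one_right hsum
  · exact hP.integral_mul_apply_of_ne hij

theorem IsRotationInvariant.integral_dotProduct_mul_dotProduct [IsProbabilityMeasure P]
    (hP : IsRotationInvariant P) (hsphere : ∀ᵐ v ∂P, v ⬝ᵥ v = 1) (a b : Fin n → ℝ) :
    ∫ v, (a ⬝ᵥ v) * (b ⬝ᵥ v) ∂P = a ⬝ᵥ b / n := by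
  have hexpand : ∀ v : Fin n → ℝ, (a ⬝ᵥ v) * (b ⬝ᵥ v) = ∑ i, ∑ j, a i * b j * (v i * v j) := by
    intro v
    simp only [dotProduct, Finset.sum_mul_sum]
    exact Finset.sum_congr rfl fun i _ ↦ Finset.sum_congr rfl fun j _ ↦ by ring
  have hint : ∀ i j, Integrable (fun v : Fin n → ℝ ↦ a i * b j * (v i * v j)) P :=
    fun i j ↦ ((by fun_prop : Continuous _).integrable_of_sphere hsphere).const_mul _
  simp_rw [hexpand]
  rw [integral_finsetSum _ fun i _ ↦ integrable_finsetSum _ fun j _ ↦ hint i j]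
  simp_rw [integral_finsetSum _ fun j _ ↦ hint _ j, integral_const_mul,
    hP.integral_mul_apply hsphere, mul_ite, mul_zero, Finset.sum_ite_eq, Finset.mem_univ,
    if_true, dotProduct, Finset.sum_div, div_eq_mul_inv]

end SphereMoments

noncomputable def trigCurve (d a b t : ℝ) : ℝ := d + a * sin t + b * (cos t - 1)

section TrigCurve

variable {d a b t : ℝ}

@[simp]
theorem trigCurve_zero : trigCurve d a b 0 = d := by simp [trigCurve]

theorem hasDerivAt_trigCurve : HasDerivAt (trigCurve d a b) (trigCurve a (-b) a t) t := by
  have h := (((hasDerivAt_sin t).const_mul a).const_add d).add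
    (((hasDerivAt_cos t).sub_const 1).const_mul b)
  exact h.congr_deriv (by simp only [trigCurve]; ring)

theorem abs_trigCurve_sub_le : |trigCurve d a b t - d| ≤ (|a| + |b|) * |t| := by
  have hcos : |cos t - 1| ≤ |t| := by simpa using abs_cos_sub_cos_le t 0
  calc |trigCurve d a b t - d| = |a * sin t + b * (cos t - 1)| := by
        rw [trigCurve, add_assoc, add_sub_cancel_left]
    _ ≤ |a| * |sin t| + |b| * |cos t - 1| := by
        simpa only [abs_mul] using abs_add_le (a * sin t) (b * (cos t - 1))
    _ ≤ |a| * |t| + |b| * |t| := by have := abs_sin_le_abs (x := t); gcongr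
    _ = (|a| + |b|) * |t| := by ring

theorem abs_trigCurve_le : |trigCurve d a b t| ≤ |d| + |a| + 2 * |b| := by
  have hcos : |cos t - 1| ≤ 2 := by
    rw [abs_le]; constructor <;> linarith [neg_one_le_cos t, cos_le_one t]
  calc |trigCurve d a b t| ≤ |d| + |a| * |sin t| + |b| * |cos t - 1| := by
        simpa only [trigCurve, abs_mul] using abs_add_three d (a * sin t) (b * (cos t - 1))
    _ ≤ |d| + |a| * 1 + |b| * 2 := by gcongr; exact abs_sin_le_one t
    _ = |d| + |a| + 2 * |b| := by ring

theorem integral_trigCurve {Ω : Type*} [MeasurableSpace Ω] {P : Measure Ω}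
    [IsProbabilityMeasure P] {a b : Ω → ℝ} (ha : Integrable a P) (hb : Integrable b P) :
    ∫ ω, trigCurve d (a ω) (b ω) t ∂P = trigCurve d (∫ ω, a ω ∂P) (∫ ω, b ω ∂P) t := by
  have hda : Integrable (fun ω ↦ d + a ω * sin t) P := (integrable_const d).add (ha.mul_const _)
  simp only [trigCurve]
  rw [integral_add hda (hb.mul_const _), integral_add (integrable_const d) (ha.mul_const _),
    integral_const, integral_mul_const, integral_mul_const, probReal_univ, one_smul]

end TrigCurve

theorem abs_trigCurve_sub_lt {d a b t M ε : ℝ} (hab : |a| + |b| ≤ M)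
    (ht : t ∈ ball 0 (ε / (|M| + 1))) : |trigCurve d a b t - d| < ε := by
  rw [mem_ball_zero_iff, Real.norm_eq_abs, lt_div_iff₀ (by positivity)] at ht
  calc |trigCurve d a b t - d| ≤ (|a| + |b|) * |t| := abs_trigCurve_sub_le
    _ ≤ (|M| + 1) * |t| := mul_le_mul_of_nonneg_right (by linarith [le_abs_self M]) (abs_nonneg t)
    _ < ε := by linarith

section IntegralAlongTrigCurve

variable {Ω : Type*} [MeasurableSpace Ω] {P : Measure Ω}
  {g : ℝ → ℝ} {d M : ℝ} {a b : Ω → ℝ}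

theorem aemeasurable_trigCurve {c : Ω → ℝ} (hc : AEMeasurable c P) (ha : AEMeasurable a P)
    (hb : AEMeasurable b P) (t : ℝ) :
    AEMeasurable (fun ω ↦ trigCurve (c ω) (a ω) (b ω) t) P := by
  unfold trigCurve; fun_prop

theorem eventually_hasDerivAt_integral_comp_trigCurve [IsFiniteMeasure P] (ha : AEMeasurable a P)
    (hb : AEMeasurable b P) (hab : ∀ᵐ ω ∂P, |a ω| + |b ω| ≤ M)
    (hg : ∀ᶠ c in 𝓝 d, DifferentiableAt ℝ g c) (hg' : ContinuousAt (deriv g) d) :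
    ∀ᶠ t in 𝓝 0, HasDerivAt (fun t ↦ ∫ ω, g (trigCurve d (a ω) (b ω) t) ∂P)
      (∫ ω, deriv g (trigCurve d (a ω) (b ω) t) * trigCurve (a ω) (-b ω) (a ω) t ∂P) t := by
  set K := |deriv g d| + 1
  obtain ⟨ε, hε, hgε⟩ := nhds_basis_closedBall.eventually_iff.1 <|
    hg.and (hg'.abs.eventually (gt_mem_nhds (lt_add_one |deriv g d|)))
  have hg_cont : ContinuousOn g (closedBall d ε) :=
    fun c hc ↦ (hgε hc).1.continuousAt.continuousWithinAt
  obtain ⟨B, hB⟩ := (isCompact_closedBall d ε).exists_bound_of_continuousOn hg_cont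
  set δ := ε / (|M| + 1)
  have hmem : ∀ᵐ ω ∂P, ∀ t ∈ ball 0 δ, trigCurve d (a ω) (b ω) t ∈ closedBall d ε :=
    hab.mono fun ω hω t ht ↦ (abs_trigCurve_sub_lt hω ht).le
  filter_upwards [isOpen_ball.mem_nhds (mem_ball_self (by positivity : 0 < δ))] with t₀ ht₀
  refine (hasDerivAt_integral_of_dominated_loc_of_deriv_le
    (F := fun t ω ↦ g (trigCurve d (a ω) (b ω) t))
    (F' := fun t ω ↦ deriv g (trigCurve d (a ω) (b ω) t) * trigCurve (a ω) (-b ω) (a ω) t)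
    (bound := fun _ ↦ K * (3 * M))
    (isOpen_ball.mem_nhds ht₀) ?_ ?_ ?_ ?_ (integrable_const (μ := P) _) ?_).2
  · filter_upwards [isOpen_ball.mem_nhds ht₀] with t ht
    exact (hg_cont.aemeasurable_comp measurableSet_closedBall
      (aemeasurable_trigCurve aemeasurable_const ha hb t)
      (hmem.mono fun ω hω ↦ hω t ht)).aestronglyMeasurable
  · exact Integrable.of_bound (hg_cont.aemeasurable_comp measurableSet_closedBall
      (aemeasurable_trigCurve aemeasurable_const ha hb t₀)
      (hmem.mono fun ω hω ↦ hω t₀ ht₀)).aestronglyMeasurable B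
      (hmem.mono fun ω hω ↦ hB _ (hω t₀ ht₀))
  · exact (((measurable_deriv g).comp_aemeasurable
      (aemeasurable_trigCurve aemeasurable_const ha hb t₀)).mul
      (aemeasurable_trigCurve ha (hb.neg) ha t₀)).aestronglyMeasurable
  · filter_upwards [hmem, hab] with ω hω hωM t ht
    rw [Real.norm_eq_abs, abs_mul]
    have h1 : |trigCurve (a ω) (-b ω) (a ω) t| ≤ 3 * M := by
      have := abs_trigCurve_le (d := a ω) (a := -b ω) (b := a ω) (t := t)
      rw [abs_neg] at this
      linarith [abs_nonneg (a ω), abs_nonneg (b ω)]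
    exact mul_le_mul (hgε (hω t ht)).2.le h1 (abs_nonneg _) (by positivity)
  · filter_upwards [hmem] with ω hω t ht
    exact ((hgε (hω t ht)).1.hasDerivAt).comp t hasDerivAt_trigCurve

theorem hasDerivAt_integral_deriv_comp_trigCurve [IsFiniteMeasure P] (ha : AEMeasurable a P)
    (hb : AEMeasurable b P) (hab : ∀ᵐ ω ∂P, |a ω| + |b ω| ≤ M)
    (hg' : DifferentiableAt ℝ (deriv g) d) :
    HasDerivAt
      (fun t ↦ ∫ ω, deriv g (trigCurve d (a ω) (b ω) t) * trigCurve (a ω) (-b ω) (a ω) t ∂P)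
      (∫ ω, deriv (deriv g) d * a ω ^ 2 - deriv g d * b ω ∂P) 0 := by
  obtain ⟨L, hL⟩ := hg'.hasDerivAt.isBigO_sub.bound
  obtain ⟨ε, hε, hLε⟩ := Metric.eventually_nhds_iff_ball.1 hL
  set δ := ε / (|M| + 1)
  set C := |deriv g d| * |M| + |L| * |M| * (3 * |M|)
  have hF_meas : ∀ t, AEMeasurable
      (fun ω ↦ deriv g (trigCurve d (a ω) (b ω) t) * trigCurve (a ω) (-b ω) (a ω) t) P :=
    fun t ↦ ((measurable_deriv g).comp_aemeasurable
      (aemeasurable_trigCurve aemeasurable_const ha hb t)).mul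
      (aemeasurable_trigCurve ha hb.neg ha t)
  refine (hasDerivAt_integral_of_dominated_loc_of_lip'
    (F := fun t ω ↦ deriv g (trigCurve d (a ω) (b ω) t) * trigCurve (a ω) (-b ω) (a ω) t)
    (F' := fun ω ↦ deriv (deriv g) d * a ω ^ 2 - deriv g d * b ω) (bound := fun _ ↦ C)
    (ball_mem_nhds 0 (by positivity : 0 < δ)) ?_ ?_ ?_ ?_ (integrable_const (μ := P) _) ?_).2
  · exact fun t _ ↦ (hF_meas t).aestronglyMeasurable
  · refine Integrable.of_bound (hF_meas 0).aestronglyMeasurable (|deriv g d| * M) ?_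
    filter_upwards [hab] with ω hω
    simp only [trigCurve_zero, Real.norm_eq_abs, abs_mul]
    gcongr
    linarith [abs_nonneg (b ω)]
  · exact ((ha.pow_const 2).const_mul _ |>.sub (hb.const_mul _)).aestronglyMeasurable
  · filter_upwards [hab] with ω hω x hx
    set c := trigCurve d (a ω) (b ω) x
    set c' := trigCurve (a ω) (-b ω) (a ω) x
    have hM : |a ω| + |b ω| ≤ |M| := hω.trans (le_abs_self M)
    have hc : |c - d| ≤ |M| * |x| :=
      abs_trigCurve_sub_le.trans (mul_le_mul_of_nonneg_right hM (abs_nonneg x))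
    have hc' : |c' - a ω| ≤ |M| * |x| := by
      refine abs_trigCurve_sub_le.trans (mul_le_mul_of_nonneg_right ?_ (abs_nonneg x))
      rw [abs_neg]; linarith
    have hc'_le : |c'| ≤ 3 * |M| := by
      have : |c'| ≤ |a ω| + |-b ω| + 2 * |a ω| := abs_trigCurve_le
      rw [abs_neg] at this; linarith [abs_nonneg (b ω)]
    have hgc : |deriv g c - deriv g d| ≤ |L| * (|M| * |x|) := by
      have := hLε c (by rw [mem_ball, Real.dist_eq]; exact abs_trigCurve_sub_lt hω hx)
      rw [Real.norm_eq_abs, Real.norm_eq_abs] at this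
      exact this.trans (mul_le_mul (le_abs_self L) hc (abs_nonneg _) (abs_nonneg L))
    simp only [trigCurve_zero, Real.norm_eq_abs, sub_zero]
    calc |deriv g c * c' - deriv g d * a ω|
        = |deriv g d * (c' - a ω) + (deriv g c - deriv g d) * c'| := by ring_nf
      _ ≤ |deriv g d| * |c' - a ω| + |deriv g c - deriv g d| * |c'| := by
        rw [← abs_mul, ← abs_mul]; exact abs_add_le _ _
      _ ≤ |deriv g d| * (|M| * |x|) + |L| * (|M| * |x|) * (3 * |M|) := by gcongr
      _ = C * |x| := by ring
  · refine ae_of_all _ fun ω ↦ ?_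
    have hcomp : HasDerivAt (fun t ↦ deriv g (trigCurve d (a ω) (b ω) t))
        (deriv (deriv g) d * trigCurve (a ω) (-b ω) (a ω) 0) 0 :=
      hg'.hasDerivAt.comp_of_eq 0 hasDerivAt_trigCurve trigCurve_zero.symm
    exact (hcomp.mul hasDerivAt_trigCurve).congr_deriv (by simp only [trigCurve_zero]; ring)

theorem deriv_integral_comp_trigCurve [IsFiniteMeasure P] (ha : AEMeasurable a P)
    (hb : AEMeasurable b P) (hab : ∀ᵐ ω ∂P, |a ω| + |b ω| ≤ M)
    (hg : ∀ᶠ c in 𝓝 d, DifferentiableAt ℝ g c) (hg' : DifferentiableAt ℝ (deriv g) d) :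
    deriv (fun t ↦ ∫ ω, g (trigCurve d (a ω) (b ω) t) ∂P) 0 = deriv g d * ∫ ω, a ω ∂P ∧
    deriv (deriv (fun t ↦ ∫ ω, g (trigCurve d (a ω) (b ω) t) ∂P)) 0 =
      deriv (deriv g) d * ∫ ω, a ω ^ 2 ∂P - deriv g d * ∫ ω, b ω ∂P := by
  have hderiv := eventually_hasDerivAt_integral_comp_trigCurve ha hb hab hg hg'.continuousAt
  have ha2 : Integrable (fun ω ↦ a ω ^ 2) P := by
    refine Integrable.of_bound (ha.pow_const 2).aestronglyMeasurable (M ^ 2) ?_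
    filter_upwards [hab] with ω hω
    rw [norm_pow, Real.norm_eq_abs]
    exact pow_le_pow_left₀ (abs_nonneg _) (by linarith [abs_nonneg (b ω)]) 2
  have hb_int : Integrable b P := by
    refine Integrable.of_bound hb.aestronglyMeasurable M ?_
    filter_upwards [hab] with ω hω
    rw [Real.norm_eq_abs]; linarith [abs_nonneg (a ω)]
  constructor
  · rw [hderiv.self_of_nhds.deriv]
    simp only [trigCurve_zero]
    exact integral_const_mul _ _
  · rw [EventuallyEq.deriv_eq (hderiv.mono fun t ht ↦ ht.deriv),
      (hasDerivAt_integral_deriv_comp_trigCurve ha hb hab hg').deriv,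
      integral_sub (ha2.const_mul _) (hb_int.const_mul _), integral_const_mul, integral_const_mul]

end IntegralAlongTrigCurve

noncomputable def rodrigues (ω : Fin 3 → ℝ) (β : ℝ) : Matrix (Fin 3) (Fin 3) ℝ :=
  Real.sin β • !![0, -ω 2, ω 1; ω 2, 0, -ω 0; -ω 1, ω 0, 0]
    + Real.cos β • (1 - vecMulVec ω ω) + vecMulVec ω ω

theorem dotProduct_rodrigues_mulVec (x y ω : Fin 3 → ℝ) (β : ℝ) :
    x ⬝ᵥ rodrigues ω β *ᵥ y =
      trigCurve (x ⬝ᵥ y) (y ⨯₃ x ⬝ᵥ ω) (x ⬝ᵥ y - (x ⬝ᵥ ω) * (y ⬝ᵥ ω)) β := by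
  simp only [dotProduct, mulVec, rodrigues, Fin.isValue, smul_of, smul_cons, smul_eq_mul,
    mul_zero, mul_neg, Matrix.smul_empty, Matrix.add_apply, of_apply, cons_val', cons_val_fin_one,
    Matrix.smul_apply, Matrix.sub_apply, one_apply, vecMulVec_apply, Fin.sum_univ_three,
    cons_val_zero, cons_val_one, cons_val, ↓reduceIte, zero_add, zero_ne_one, zero_sub,
    Fin.reduceEq, one_ne_zero, trigCurve, cross_apply, Nat.succ_eq_add_one, Nat.reduceAdd]
  ring

section SphereTransport

variable {P : Measure (Fin 3 → ℝ)} [IsProbabilityMeasure P]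

theorem IsRotationInvariant.integral_cross_dotProduct_sq (hP : IsRotationInvariant P)
    (hsphere : ∀ᵐ v ∂P, v ⬝ᵥ v = 1) {x y : Fin 3 → ℝ} (hx : x ⬝ᵥ x = 1) (hy : y ⬝ᵥ y = 1) :
    ∫ ω, (y ⨯₃ x ⬝ᵥ ω) ^ 2 ∂P = (1 - (x ⬝ᵥ y) ^ 2) / 3 := by
  simp_rw [sq, hP.integral_dotProduct_mul_dotProduct hsphere, cross_dot_cross, hx, hy,
    dotProduct_comm y x]
  norm_num

theorem IsRotationInvariant.integral_sub_dotProduct_mul_dotProduct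
    (hP : IsRotationInvariant P) (hsphere : ∀ᵐ v ∂P, v ⬝ᵥ v = 1) (x y : Fin 3 → ℝ) :
    ∫ ω, (x ⬝ᵥ y - (x ⬝ᵥ ω) * (y ⬝ᵥ ω)) ∂P = 2 * (x ⬝ᵥ y) / 3 := by
  rw [integral_sub (integrable_const _) ((by fun_prop : Continuous _).integrable_of_sphere hsphere),
    hP.integral_dotProduct_mul_dotProduct hsphere, integral_const, probReal_univ, one_smul]
  norm_num
  ring

theorem IsRotationInvariant.deriv_integral_comp_rodrigues (hP : IsRotationInvariant P)
    (hsphere : ∀ᵐ v ∂P, v ⬝ᵥ v = 1) {x y : Fin 3 → ℝ} (hx : x ⬝ᵥ x = 1) (hy : y ⬝ᵥ y = 1)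
    {g : ℝ → ℝ} (hg : ∀ᶠ c in 𝓝 (x ⬝ᵥ y), DifferentiableAt ℝ g c)
    (hg' : DifferentiableAt ℝ (deriv g) (x ⬝ᵥ y)) :
    deriv (fun t ↦ ∫ ω, g (x ⬝ᵥ rodrigues ω t *ᵥ y) ∂P) 0 = 0 ∧
    deriv (deriv (fun t ↦ ∫ ω, g (x ⬝ᵥ rodrigues ω t *ᵥ y) ∂P)) 0 =
      (deriv (deriv g) (x ⬝ᵥ y) * (1 - (x ⬝ᵥ y) ^ 2) - 2 * deriv g (x ⬝ᵥ y) * (x ⬝ᵥ y)) / 3 := by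
  have ha : Continuous fun ω : Fin 3 → ℝ ↦ y ⨯₃ x ⬝ᵥ ω := by fun_prop
  have hb : Continuous fun ω : Fin 3 → ℝ ↦ x ⬝ᵥ y - (x ⬝ᵥ ω) * (y ⬝ᵥ ω) := by fun_prop
  obtain ⟨M, hM⟩ := (ha.abs.add hb.abs).exists_ae_abs_le_of_sphere hsphere
  obtain ⟨h1, h2⟩ := deriv_integral_comp_trigCurve ha.aemeasurable hb.aemeasurable
    (hM.mono fun ω h ↦ (le_abs_self _).trans h) hg hg'
  simp_rw [dotProduct_rodrigues_mulVec]
  rw [h1, h2, hP.integral_dotProduct, hP.integral_cross_dotProduct_sq hsphere hx hy,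
    hP.integral_sub_dotProduct_mul_dotProduct hsphere]
  constructor <;> ring

theorem IsRotationInvariant.integral_dotProduct_rodrigues_mulVec (hP : IsRotationInvariant P)
    (hsphere : ∀ᵐ v ∂P, v ⬝ᵥ v = 1) (x y : Fin 3 → ℝ) (t : ℝ) :
    ∫ ω, x ⬝ᵥ rodrigues ω t *ᵥ y ∂P = (1 + 2 * cos t) * (x ⬝ᵥ y) / 3 := by
  simp_rw [dotProduct_rodrigues_mulVec]
  rw [integral_trigCurve ((by fun_prop : Continuous _).integrable_of_sphere hsphere)
    ((by fun_prop : Continuous _).integrable_of_sphere hsphere), hP.integral_dotProduct,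
    hP.integral_sub_dotProduct_mul_dotProduct hsphere, trigCurve]
  ring

end SphereTransport

theorem sphere_transport_derivatives_general (ψS : ℝ → ℝ)
    (hd1 : ∀ c ∈ Ioo (-1 : ℝ) 1, DifferentiableAt ℝ ψS c)
    (hd2 : ∀ c ∈ Ioo (-1 : ℝ) 1, DifferentiableAt ℝ (deriv ψS) c)
    (P : Measure (Fin 3 → ℝ)) [IsProbabilityMeasure P]
    (hsphere : ∀ᵐ v ∂P, v 0 ^ 2 + v 1 ^ 2 + v 2 ^ 2 = 1)
    (hinv : ∀ O : Matrix.orthogonalGroup (Fin 3) ℝ,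
      Measure.map ((O : Matrix (Fin 3) (Fin 3) ℝ).mulVec) P = P)
    (x y : Fin 3 → ℝ)
    (hx : x 0 ^ 2 + x 1 ^ 2 + x 2 ^ 2 = 1)
    (hy : y 0 ^ 2 + y 1 ^ 2 + y 2 ^ 2 = 1)
    (α : ℝ)
    (θ : ℝ) (hθdef : θ = Real.arccos (x ⬝ᵥ y)) (hθ : θ ∈ Ioo 0 Real.pi)
    (R : (Fin 3 → ℝ) → ℝ → Matrix (Fin 3) (Fin 3) ℝ)
    (hR : ∀ ω β, R ω β = Real.sin β • !![0, -ω 2, ω 1; ω 2, 0, -ω 0; -ω 1, ω 0, 0]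
      + Real.cos β • (1 - vecMulVec ω ω) + vecMulVec ω ω)
    (ψ : ℝ → ℝ)
    (hψ : ∀ u, ψ u = ∫ ω, ψS (x ⬝ᵥ (R ω (u * α)).mulVec y) ∂P) :
    deriv ψ 0 = 0 ∧
    deriv (deriv ψ) 0 = (α ^ 2 / 3) *
      (deriv (deriv ψS) (Real.cos θ) * Real.sin θ ^ 2
        - 2 * deriv ψS (Real.cos θ) * Real.cos θ) ∧
    ((∀ c, ψS c = c) → ∀ u, ψ u = (1 + 2 * Real.cos (u * α)) * Real.cos θ / 3) ∧
    (∀ t ∈ Ioo 0 (Real.pi / 2), -2 * Real.cos t < 0) ∧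
    (∀ t ∈ Ioo (Real.pi / 2) Real.pi, 0 < -2 * Real.cos t) := by
  have hP : IsRotationInvariant P := hinv
  have hunit : ∀ v : Fin 3 → ℝ, v 0 ^ 2 + v 1 ^ 2 + v 2 ^ 2 = 1 → v ⬝ᵥ v = 1 := fun v hv ↦ by
    simpa [dotProduct, Fin.sum_univ_three, sq] using hv
  replace hsphere := hsphere.mono hunit
  obtain rfl : R = rodrigues := funext fun ω ↦ funext (hR ω)
  set Ψ := fun t ↦ ∫ ω, ψS (x ⬝ᵥ rodrigues ω t *ᵥ y) ∂P
  have hψΨ : ψ = (Ψ <| α * ·) := funext fun u ↦ by simp only [hψ, Ψ, mul_comm u α]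
  have hd : x ⬝ᵥ y ∈ Ioo (-1) 1 := by
    rw [hθdef] at hθ
    exact ⟨arccos_lt_pi.1 hθ.2, arccos_pos.1 hθ.1⟩
  have hcos : cos θ = x ⬝ᵥ y := by rw [hθdef, cos_arccos hd.1.le hd.2.le]
  obtain ⟨hΨ1, hΨ2⟩ := hP.deriv_integral_comp_rodrigues hsphere (hunit x hx) (hunit y hy)
    (eventually_of_mem (Ioo_mem_nhds hd.1 hd.2) hd1) (hd2 _ hd)
  refine ⟨?_, ?_, fun hlin u ↦ ?_, fun t ht ↦ ?_, fun t ht ↦ ?_⟩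
  · rw [hψΨ, deriv_comp_mul_left, mul_zero, hΨ1, smul_zero]
  · rw [hψΨ, deriv_deriv_comp_mul_left, mul_zero, hΨ2, sin_sq, hcos]
    ring
  · simp only [hψ, hlin, hP.integral_dotProduct_rodrigues_mulVec hsphere, hcos]
  · linarith [cos_pos_of_mem_Ioo ⟨by linarith [ht.1, pi_pos], ht.2⟩]
  · linarith [cos_neg_of_pi_div_two_lt_of_lt ht.1 (by linarith [ht.2, pi_pos])]

/-- Theorem 3 of the paper: for the sphere transport covariance
`ψ(θ,u) = E_ω[ψ_S(xᵀR_ω(uα)y)]`, with `ω` uniform on `S²` and `θ = arccos(xᵀy) ∈ (0,π)`,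
one has `∂ψ/∂u(θ,0) = 0` and
`∂²ψ/∂u²(θ,0) = (α²/3)(ψ_S''(cos θ) sin²θ - 2ψ_S'(cos θ) cos θ)`. For `ψ_S(c) = c` the
transport covariance is `ψ(θ,u) = (1 + 2cos(uα)) cos θ / 3`, and the dimple indicator
`-2cos θ` is negative on `(0, π/2)` and positive on `(π/2, π)`. -/
theorem sphere_transport_derivatives (ψS : ℝ → ℝ)
    (hcont : ContinuousOn ψS (Icc (-1 : ℝ) 1))
    (hd1 : ∀ c ∈ Ioo (-1 : ℝ) 1, DifferentiableAt ℝ ψS c)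
    (hd2 : ∀ c ∈ Ioo (-1 : ℝ) 1, DifferentiableAt ℝ (deriv ψS) c)
    (P : Measure (Fin 3 → ℝ)) [IsProbabilityMeasure P]
    (hsphere : ∀ᵐ v ∂P, v 0 ^ 2 + v 1 ^ 2 + v 2 ^ 2 = 1)
    (hinv : ∀ O : Matrix.orthogonalGroup (Fin 3) ℝ,
      Measure.map ((O : Matrix (Fin 3) (Fin 3) ℝ).mulVec) P = P)
    (x y : Fin 3 → ℝ)
    (hx : x 0 ^ 2 + x 1 ^ 2 + x 2 ^ 2 = 1)
    (hy : y 0 ^ 2 + y 1 ^ 2 + y 2 ^ 2 = 1)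
    (α : ℝ) (hα : 0 < α)
    (θ : ℝ) (hθdef : θ = Real.arccos (x ⬝ᵥ y)) (hθ : θ ∈ Ioo 0 Real.pi)
    (R : (Fin 3 → ℝ) → ℝ → Matrix (Fin 3) (Fin 3) ℝ)
    (hR : ∀ ω β, R ω β = Real.sin β • !![0, -ω 2, ω 1; ω 2, 0, -ω 0; -ω 1, ω 0, 0]
      + Real.cos β • (1 - vecMulVec ω ω) + vecMulVec ω ω)
    (ψ : ℝ → ℝ)
    (hψ : ∀ u, ψ u = ∫ ω, ψS (x ⬝ᵥ (R ω (u * α)).mulVec y) ∂P) :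
    deriv ψ 0 = 0 ∧
    deriv (deriv ψ) 0 = (α ^ 2 / 3) *
      (deriv (deriv ψS) (Real.cos θ) * Real.sin θ ^ 2
        - 2 * deriv ψS (Real.cos θ) * Real.cos θ) ∧
    ((∀ c, ψS c = c) → ∀ u, ψ u = (1 + 2 * Real.cos (u * α)) * Real.cos θ / 3) ∧
    (∀ t ∈ Ioo 0 (Real.pi / 2), -2 * Real.cos t < 0) ∧
    (∀ t ∈ Ioo (Real.pi / 2) Real.pi, 0 < -2 * Real.cos t) :=
  sphere_transport_derivatives_general ψS hd1 hd2 P hsphere hinv x y hx hy α θ hθdef hθ R hR ψ hψ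
end
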